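/- Let f be a holomorphic mapping defined on an open neighborhood of a point t ∈ ℂⁿ into ℂⁿ with det f′(t) ≠ 0, and let λ_f > 0 be the positive square root of the smallest eigenvalue of the Hermitian matrix A*A, where A = f′(t). Let Ω_f = {z in the domain of f : |f′(z) − f′(t)| < λ_f}, where |·| denotes the operator norm. If r₀ > 0 is such that the open ball B(t, r₀) = {z : |z − t| < r₀} is contained in Ω_f, then f(B(t, r₀)) contains the open ball centered at f(t) of radius r₀·λ_f/2. -/

import Mathlib

open Metric

/-- The complex Jacobian matrix of `f` at `z`. -/
noncomputable def jacobian {n : ℕ} (f : EuclideanSpace ℂ (Fin n) → EuclideanSpace ℂ (Fin n))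
    (z : EuclideanSpace ℂ (Fin n)) : Matrix (Fin n) (Fin n) ℂ :=
  fun i j => fderiv ℂ f z (EuclideanSpace.single j 1) i

/-- The Frobenius norm of a complex matrix. -/
noncomputable def frobNorm {n : ℕ} (A : Matrix (Fin n) (Fin n) ℂ) : ℝ :=
  Real.sqrt (∑ i, ∑ j, ‖A i j‖ ^ 2)

/-- The smallest eigenvalue of the Hermitian matrix `Aᴴ * A`. -/
noncomputable def minEigAhA {n : ℕ} (A : Matrix (Fin n) (Fin n) ℂ) : ℝ :=
  ⨅ i, (Matrix.isHermitian_conjTranspose_mul_self A).eigenvalues i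

/-- The largest eigenvalue of the Hermitian matrix `Aᴴ * A`. -/
noncomputable def maxEigAhA {n : ℕ} (A : Matrix (Fin n) (Fin n) ℂ) : ℝ :=
  ⨆ i, (Matrix.isHermitian_conjTranspose_mul_self A).eigenvalues i

section HahnProof

open Matrix ComplexOrder Real Set

lemma minEigAhA_nonneg {n : ℕ} (A : Matrix (Fin n) (Fin n) ℂ) : 0 ≤ minEigAhA A :=
  Real.iInf_nonneg (Matrix.eigenvalues_conjTranspose_mul_self_nonneg A)

lemma rayleigh {n : ℕ} (A : Matrix (Fin n) (Fin n) ℂ) (v : Fin n → ℂ) :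
    minEigAhA A * ∑ j, ‖v j‖ ^ 2 ≤ ∑ i, ‖(A.mulVec v) i‖ ^ 2 := by
  rcases isEmpty_or_nonempty (Fin n) with hn | hn
  · simp
  set hM := Matrix.isHermitian_conjTranspose_mul_self A with hMdef
  set μ := minEigAhA A with hμdef
  have hμle : ∀ i, μ ≤ hM.eigenvalues i := fun i =>
    ciInf_le (Set.Finite.bddBelow (Set.finite_range _)) i
  set U : Matrix (Fin n) (Fin n) ℂ := (hM.eigenvectorUnitary : Matrix (Fin n) (Fin n) ℂ) with hU
  have hUU : U * star U = 1 := (Matrix.mem_unitaryGroup_iff).mp hM.eigenvectorUnitary.2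
  have hdiag : Matrix.PosSemidef
      (Matrix.diagonal (fun i => ((hM.eigenvalues i - μ : ℝ) : ℂ))) := by
    refine Matrix.PosSemidef.diagonal fun i => ?_
    show (0:ℂ) ≤ _
    rw [Complex.zero_le_real]
    linarith [hμle i]
  have hd2 : Matrix.diagonal (RCLike.ofReal ∘ hM.eigenvalues) - (μ:ℂ) • 1
      = Matrix.diagonal (fun i => ((hM.eigenvalues i - μ : ℝ) : ℂ)) := by
    rw [← Matrix.diagonal_one, ← Matrix.diagonal_smul, Matrix.diagonal_sub]
    congr 1
    funext i
    simp
  have hN : Matrix.PosSemidef (Aᴴ * A - (μ:ℂ) • 1) := by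
    have h1 : Aᴴ * A - (μ:ℂ) • 1
        = U * Matrix.diagonal (fun i => ((hM.eigenvalues i - μ : ℝ) : ℂ)) * star U := by
      rw [← hd2]
      calc Aᴴ * A - (μ:ℂ) • 1
          = U * Matrix.diagonal (RCLike.ofReal ∘ hM.eigenvalues) * star U
            - (μ:ℂ) • (U * star U) := by
              have hs := hM.spectral_theorem
              rw [Unitary.conjStarAlgAut_apply] at hs
              rw [← hs, hUU]
        _ = _ := by
            simp only [Matrix.mul_sub, Matrix.sub_mul, Matrix.mul_smul, Matrix.smul_mul,
              Matrix.mul_one]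
    rw [h1]
    exact hdiag.mul_mul_conjTranspose_same U
  have key := hN.re_dotProduct_nonneg v
  have h2 : dotProduct (star v) ((Aᴴ * A - (μ:ℂ) • 1) *ᵥ v)
      = dotProduct (star (A *ᵥ v)) (A *ᵥ v) - (μ:ℂ) * dotProduct (star v) v := by
    rw [Matrix.sub_mulVec, dotProduct_sub, ← Matrix.mulVec_mulVec,
      dotProduct_mulVec (star v), ← Matrix.star_mulVec, Matrix.smul_mulVec,
      Matrix.one_mulVec, dotProduct_smul, smul_eq_mul]
  have h3 : ∀ (w : Fin n → ℂ), RCLike.re (dotProduct (star w) w) = ∑ i, ‖w i‖ ^ 2 := by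
    intro w
    rw [dotProduct, _root_.map_sum]
    congr 1; funext i
    rw [Pi.star_apply, RCLike.star_def, RCLike.conj_mul]
    norm_cast
  have h4 : RCLike.re ((μ:ℂ) * dotProduct (star v) v)
      = μ * RCLike.re (dotProduct (star v) v) := by
    simp [RCLike.re_to_complex, Complex.re_ofReal_mul]
  rw [h2, map_sub, h4, h3, h3] at key
  linarith

namespace HahnAux
variable {n : ℕ}
local notation "E" => EuclideanSpace ℂ (Fin n)

/-- the matrix of a continuous linear map in the standard basis -/
noncomputable def matOf (L : EuclideanSpace ℂ (Fin n) →L[ℂ] EuclideanSpace ℂ (Fin n)) :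
    Matrix (Fin n) (Fin n) ℂ :=
  fun i j => L (EuclideanSpace.single j 1) i

lemma sum_single (v : E) : ∑ j, v j • EuclideanSpace.single j (1:ℂ) = v := by
  have := (EuclideanSpace.basisFun (Fin n) ℂ).sum_repr v
  simpa [EuclideanSpace.basisFun_repr, EuclideanSpace.basisFun_apply] using this

lemma matOf_mulVec (L : E →L[ℂ] E) (v : E) (i : Fin n) :
    (matOf L).mulVec v i = L v i := by
  conv_rhs => rw [← sum_single v]
  rw [map_sum]
  have : (∑ j, L (v j • EuclideanSpace.single j (1:ℂ))) i
      = ∑ j, (L (v j • EuclideanSpace.single j (1:ℂ))) i := by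
    rw [WithLp.ofLp_sum]; exact Finset.sum_apply i Finset.univ _
  rw [this]
  simp only [_root_.map_smul]
  simp [Matrix.mulVec, dotProduct, matOf, mul_comm]

lemma lam_mul_norm_le (L : E →L[ℂ] E) (v : E) :
    Real.sqrt (minEigAhA (matOf L)) * ‖v‖ ≤ ‖L v‖ := by
  have h1 : minEigAhA (matOf L) * ‖v‖^2 ≤ ‖L v‖^2 := by
    rw [EuclideanSpace.norm_eq v, EuclideanSpace.norm_eq (L v),
      Real.sq_sqrt (by positivity), Real.sq_sqrt (by positivity)]
    calc minEigAhA (matOf L) * ∑ j, ‖v j‖^2 ≤ ∑ i, ‖(matOf L).mulVec v i‖^2 := rayleigh _ v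
    _ = ∑ i, ‖L v i‖^2 := by simp [matOf_mulVec]
  calc Real.sqrt (minEigAhA (matOf L)) * ‖v‖
      = Real.sqrt (minEigAhA (matOf L) * ‖v‖^2) := by
        rw [Real.sqrt_mul (minEigAhA_nonneg _), Real.sqrt_sq (norm_nonneg _)]
    _ ≤ Real.sqrt (‖L v‖^2) := Real.sqrt_le_sqrt h1
    _ = ‖L v‖ := Real.sqrt_sq (norm_nonneg _)


lemma diff_line {V : Set (EuclideanSpace ℂ (Fin n))} (hV : IsOpen V)
    {f : EuclideanSpace ℂ (Fin n) → EuclideanSpace ℂ (Fin n)} (hf : DifferentiableOn ℂ f V)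
    (t : EuclideanSpace ℂ (Fin n)) {r₀ : ℝ} (hsub : ball t r₀ ⊆ V)
    {e u : EuclideanSpace ℂ (Fin n)} (he : ‖e‖ ≤ 1) (hu : ‖u‖ ≤ 1)
    {CA : ℝ} (hbd : ∀ z ∈ ball t r₀, ‖fderiv ℂ f z‖ ≤ CA) :
    DifferentiableOn ℂ (fun ζ : ℂ => fderiv ℂ f (t + ζ • e) u) (ball (0:ℂ) r₀) := by
  borelize (EuclideanSpace ℂ (Fin n))
  intro ζ₀ hζ₀
  refine DifferentiableAt.differentiableWithinAt ?_
  rw [mem_ball, dist_zero_right] at hζ₀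
  set δ : ℝ := (r₀ - ‖ζ₀‖)/4 with hδdef
  have hδ : 0 < δ := by simp only [hδdef]; linarith
  -- membership of the relevant points
  have hmem : ∀ ζ : ℂ, ‖ζ - ζ₀‖ < 2*δ → ∀ η : ℂ, ‖η‖ ≤ 2*δ → t + ζ • e + η • u ∈ ball t r₀ := by
    intro ζ hζ η hη
    have h1 : ‖ζ‖ < ‖ζ₀‖ + 2*δ := by
      calc ‖ζ‖ ≤ ‖ζ - ζ₀‖ + ‖ζ₀‖ := by simpa using norm_add_le (ζ - ζ₀) ζ₀
        _ < ‖ζ₀‖ + 2*δ := by linarith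
    rw [mem_ball, dist_eq_norm]
    have : t + ζ • e + η • u - t = ζ • e + η • u := by abel
    rw [this]
    calc ‖ζ • e + η • u‖ ≤ ‖ζ‖ * ‖e‖ + ‖η‖ * ‖u‖ := by
          refine (norm_add_le _ _).trans ?_
          simp [norm_smul]
      _ ≤ ‖ζ‖ * 1 + 2*δ * 1 := by gcongr
      _ < r₀ := by rw [mul_one, mul_one]; simp only [hδdef] at h1 ⊢; linarith
  have hdiffat : ∀ x ∈ ball t r₀, DifferentiableAt ℂ f x := fun x hx =>
    hf.differentiableAt (hV.mem_nhds (hsub hx))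
  have hcont : ContinuousOn f (ball t r₀) := ((hf.mono hsub)).continuousOn
  set R : ℝ := δ with hRdef
  have hR : 0 < R := hδ
  -- scalar factor
  set c : ℝ → ℂ := fun θ => deriv (circleMap 0 R) θ * (circleMap 0 R θ)^(-2:ℤ) with hcdef
  have hc_cont : Continuous c := by
    simp only [hcdef, deriv_circleMap]
    exact ((continuous_circleMap 0 R).mul continuous_const).mul
      ((continuous_circleMap 0 R).zpow₀ (-2) fun θ =>
        Or.inl (by simpa [circleMap_eq_center_iff] using hR.ne'))
  have hc_norm : ∀ θ, ‖c θ‖ = R⁻¹ := by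
    intro θ
    have hz : ‖circleMap 0 R θ‖ = R := by
      simpa [abs_of_pos hR] using norm_circleMap_zero R θ
    simp only [hcdef, deriv_circleMap]
    rw [norm_mul, norm_mul, norm_zpow, hz, Complex.norm_I, mul_one, _root_.zpow_neg,
      show ((2:ℤ)) = ((2:ℕ):ℤ) by norm_num, zpow_natCast, sq, mul_inv, ← mul_assoc,
      mul_inv_cancel₀ hR.ne', one_mul]
  set g : ℂ → ℝ → EuclideanSpace ℂ (Fin n) :=
    fun ζ θ => c θ • f (t + ζ • e + circleMap 0 R θ • u) with hgdef
  set g' : ℂ → ℝ → EuclideanSpace ℂ (Fin n) :=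
    fun ζ θ => c θ • (fderiv ℂ f (t + ζ • e + circleMap 0 R θ • u) e) with hg'def
  have hRmem : ∀ (ζ : ℂ), ‖ζ - ζ₀‖ < 2*δ → ∀ θ : ℝ,
      t + ζ • e + circleMap 0 R θ • u ∈ ball t r₀ := by
    intro ζ hζ θ
    refine hmem ζ hζ _ ?_
    have : ‖circleMap 0 R θ‖ = R := by
      simpa [abs_of_pos hR] using norm_circleMap_zero R θ
    rw [this]; simp only [hRdef]; linarith
  -- continuity of g x
  have hg_cont : ∀ ζ : ℂ, ‖ζ - ζ₀‖ < 2*δ → Continuous (g ζ) := by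
    intro ζ hζ
    refine hc_cont.smul ?_
    refine hcont.comp_continuous ?_ (fun θ => hRmem ζ hζ θ)
    exact continuous_const.add ((continuous_circleMap 0 R).smul continuous_const)
  -- representation formula
  have hrep : ∀ ζ : ℂ, ‖ζ - ζ₀‖ < 2*δ →
      fderiv ℂ f (t + ζ • e) u
        = (2 * Real.pi * Complex.I : ℂ)⁻¹ • ∫ θ in (0:ℝ)..2*Real.pi, g ζ θ := by
    intro ζ hζ
    have hdiffh : DifferentiableOn ℂ (fun η : ℂ => f (t + ζ • e + η • u)) (closedBall 0 R) := by
      intro η hη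
      refine DifferentiableAt.differentiableWithinAt ?_
      have hη' : ‖η‖ ≤ 2*δ := by
        rw [mem_closedBall, dist_zero_right] at hη
        simp only [hRdef] at hη; linarith
      exact (hdiffat _ (hmem ζ hζ η hη')).comp η
        ((differentiableAt_const _).add (differentiableAt_id.smul_const u))
    have hdc : DiffContOnCl ℂ (fun η : ℂ => f (t + ζ • e + η • u)) (ball 0 R) :=
      (hdiffh.mono closure_ball_subset_closedBall).diffContOnCl
    have hder : HasDerivAt (fun η : ℂ => f (t + ζ • e + η • u))
        (fderiv ℂ f (t + ζ • e) u) 0 := by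
      have hin : HasDerivAt (fun η : ℂ => t + ζ • e + η • u) u 0 := by
        simpa [id_eq, one_smul] using
          ((hasDerivAt_id (0:ℂ)).smul_const u).const_add (t + ζ • e)
      have hpt : t + ζ • e ∈ ball t r₀ := by
        simpa using hmem ζ hζ 0 (by simp; positivity)
      have hfd : HasFDerivAt f (fderiv ℂ f (t + ζ • e)) (t + ζ • e + (0:ℂ) • u) := by
        simpa using (hdiffat _ hpt).hasFDerivAt
      exact hfd.comp_hasDerivAt (0:ℂ) hin
    have h0 : deriv (fun η : ℂ => f (t + ζ • e + η • u)) 0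
        = (2 * Real.pi * Complex.I : ℂ)⁻¹ •
          circleIntegral (fun z => (z - 0) ^ (-2 : ℤ) • f (t + ζ • e + z • u)) 0 R := by
      have h00 := hdc.deriv_eq_smul_circleIntegral hR
      calc deriv (fun η : ℂ => f (t + ζ • e + η • u)) 0
          = (2 * Real.pi * Complex.I : ℂ)⁻¹ •
            ((2 * Real.pi * Complex.I : ℂ) • deriv (fun η : ℂ => f (t + ζ • e + η • u)) 0) := by
            rw [inv_smul_smul₀ Complex.two_pi_I_ne_zero]
        _ = _ := by
            rw [← h00]
            congr 2
            funext z
            simp [_root_.zpow_neg]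
    rw [hder.deriv] at h0
    rw [h0]
    congr 1
    rw [circleIntegral]
    refine intervalIntegral.integral_congr fun θ _ => ?_
    simp only [hgdef, sub_zero, smul_smul, hcdef]
  -- differentiability of the parametric integral
  have hball2 : ∀ x ∈ ball ζ₀ δ, ‖x - ζ₀‖ < 2*δ := by
    intro x hx
    rw [mem_ball, dist_eq_norm] at hx
    linarith
  have hmain : HasDerivAt (fun ζ : ℂ => ∫ θ in (0:ℝ)..2*Real.pi, g ζ θ)
      (∫ θ in (0:ℝ)..2*Real.pi, g' ζ₀ θ) ζ₀ := by
    refine (intervalIntegral.hasDerivAt_integral_of_dominated_loc_of_deriv_le (𝕜 := ℂ)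
      (F := g) (F' := g') (bound := fun _ => R⁻¹ * CA) (ball_mem_nhds ζ₀ hδ) ?_ ?_ ?_ ?_ ?_ ?_).2
    · filter_upwards [ball_mem_nhds ζ₀ hδ] with x hx
      exact ((hg_cont x (hball2 x hx)).aestronglyMeasurable)
    · exact (hg_cont ζ₀ (by simpa using by positivity : ‖ζ₀ - ζ₀‖ < 2*δ)).intervalIntegrable _ _
    · -- measurability of g' ζ₀
      refine Measurable.aestronglyMeasurable ?_
      refine (hc_cont.measurable).smul ?_
      have h1 : Measurable fun θ : ℝ => fderiv ℂ f (t + ζ₀ • e + circleMap 0 R θ • u) :=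
        (measurable_fderiv ℂ f).comp
          (measurable_const.add ((measurable_circleMap 0 R).smul measurable_const))
      exact ((ContinuousLinearMap.apply ℂ (EuclideanSpace ℂ (Fin n)) e).continuous.measurable).comp h1
    · refine MeasureTheory.ae_of_all _ fun θ _ x hx => ?_
      simp only [hg'def]
      rw [norm_smul, hc_norm]
      have hfb : ‖fderiv ℂ f (t + x • e + circleMap 0 R θ • u)‖ ≤ CA :=
        hbd _ (hRmem x (hball2 x hx) θ)
      have h1 : ‖(fderiv ℂ f (t + x • e + circleMap 0 R θ • u)) e‖ ≤ CA := by
        refine (ContinuousLinearMap.le_opNorm _ _).trans ?_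
        calc ‖fderiv ℂ f (t + x • e + circleMap 0 R θ • u)‖ * ‖e‖ ≤ CA * 1 :=
              mul_le_mul hfb he (norm_nonneg _) ((norm_nonneg _).trans hfb)
          _ = CA := mul_one _
      exact mul_le_mul_of_nonneg_left h1 (inv_nonneg.2 hR.le)
    · exact intervalIntegrable_const
    · refine MeasureTheory.ae_of_all _ fun θ _ x hx => ?_
      simp only [hgdef, hg'def]
      refine HasDerivAt.fun_const_smul _ ?_
      have hin : HasDerivAt (fun x : ℂ => t + x • e + circleMap 0 R θ • u) e x := by
        simpa [id_eq, one_smul] using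
          (((hasDerivAt_id x).smul_const e).const_add t).add_const (circleMap 0 R θ • u)
      have hfd : HasFDerivAt f (fderiv ℂ f (t + x • e + circleMap 0 R θ • u))
          (t + x • e + circleMap 0 R θ • u) :=
        (hdiffat _ (hRmem x (hball2 x hx) θ)).hasFDerivAt
      exact hfd.comp_hasDerivAt x hin
  have heq : (fun ζ : ℂ => fderiv ℂ f (t + ζ • e) u)
      =ᶠ[nhds ζ₀] fun ζ => (2 * Real.pi * Complex.I : ℂ)⁻¹ • ∫ θ in (0:ℝ)..2*Real.pi, g ζ θ := by
    filter_upwards [ball_mem_nhds ζ₀ hδ] with x hx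
    exact hrep x (hball2 x hx)
  refine DifferentiableAt.congr_of_eventuallyEq ?_ heq
  exact hmain.differentiableAt.fun_const_smul _


lemma op_decomp (L : EuclideanSpace ℂ (Fin n) →L[ℂ] EuclideanSpace ℂ (Fin n)) :
    L = ∑ j, (EuclideanSpace.proj j).smulRight (L (EuclideanSpace.single j 1)) := by
  refine ContinuousLinearMap.ext fun v => ?_
  rw [ContinuousLinearMap.sum_apply]
  have hterm : ∀ j, ((EuclideanSpace.proj j).smulRight (L (EuclideanSpace.single j 1))) v
      = v j • L (EuclideanSpace.single j 1) := fun j => rfl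
  simp only [hterm]
  conv_lhs => rw [← sum_single v]
  rw [_root_.map_sum]
  simp only [_root_.map_smul]

lemma diff_line_op {V : Set (EuclideanSpace ℂ (Fin n))} (hV : IsOpen V)
    {f : EuclideanSpace ℂ (Fin n) → EuclideanSpace ℂ (Fin n)} (hf : DifferentiableOn ℂ f V)
    (t : EuclideanSpace ℂ (Fin n)) {r₀ : ℝ} (hsub : ball t r₀ ⊆ V)
    {e : EuclideanSpace ℂ (Fin n)} (he : ‖e‖ ≤ 1)
    {CA : ℝ} (hbd : ∀ z ∈ ball t r₀, ‖fderiv ℂ f z‖ ≤ CA) :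
    DifferentiableOn ℂ (fun ζ : ℂ => fderiv ℂ f (t + ζ • e)) (ball (0:ℂ) r₀) := by
  have hrw : (fun ζ : ℂ => fderiv ℂ f (t + ζ • e))
      = fun ζ : ℂ => ∑ j, (EuclideanSpace.proj j).smulRight
          (fderiv ℂ f (t + ζ • e) (EuclideanSpace.single j 1)) :=
    funext fun ζ => op_decomp _
  rw [hrw]
  refine DifferentiableOn.fun_sum fun j _ => ?_
  have hj := diff_line hV hf t hsub he (u := EuclideanSpace.single j 1)
    (by rw [EuclideanSpace.norm_single]; simp) hbd
  exact (ContinuousLinearMap.smulRightL ℂ (EuclideanSpace ℂ (Fin n))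
    (EuclideanSpace ℂ (Fin n)) (EuclideanSpace.proj j)).differentiable.comp_differentiableOn hj


lemma deriv_schwarz {V : Set (EuclideanSpace ℂ (Fin n))} (hV : IsOpen V)
    {f : EuclideanSpace ℂ (Fin n) → EuclideanSpace ℂ (Fin n)} (hf : DifferentiableOn ℂ f V)
    (t : EuclideanSpace ℂ (Fin n)) {r₀ lam : ℝ} (hsub : ball t r₀ ⊆ V) (hr₀ : 0 < r₀)
    (hlt : ∀ z ∈ ball t r₀, ‖fderiv ℂ f z - fderiv ℂ f t‖ < lam) :
    ∀ z ∈ ball t r₀, ‖fderiv ℂ f z - fderiv ℂ f t‖ ≤ lam * ‖z - t‖ / r₀ := by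
  have hlam : 0 < lam := (norm_nonneg _).trans_lt (hlt t (mem_ball_self hr₀))
  intro z hz
  rcases eq_or_ne z t with rfl | hzt
  · rw [sub_self, norm_zero, sub_self, norm_zero, mul_zero, zero_div]
  have hnz : ‖z - t‖ ≠ 0 := norm_ne_zero_iff.2 (sub_ne_zero.2 hzt)
  set e : EuclideanSpace ℂ (Fin n) := ‖z - t‖⁻¹ • (z - t) with hedef
  have he : ‖e‖ = 1 := by
    rw [hedef, norm_smul, norm_inv, norm_norm, inv_mul_cancel₀ hnz]
  set Ψ : ℂ → (EuclideanSpace ℂ (Fin n) →L[ℂ] EuclideanSpace ℂ (Fin n)) :=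
    fun ζ => fderiv ℂ f (t + ζ • e) - fderiv ℂ f t with hΨdef
  have hpt : ∀ ζ : ℂ, ‖ζ‖ < r₀ → t + ζ • e ∈ ball t r₀ := by
    intro ζ hζ
    rw [mem_ball, dist_eq_norm, add_sub_cancel_left, norm_smul, he, mul_one]
    exact hζ
  have hΨ0 : Ψ 0 = 0 := by simp [hΨdef]
  have hdiff : DifferentiableOn ℂ Ψ (ball (0:ℂ) r₀) := by
    have hbd : ∀ z ∈ ball t r₀, ‖fderiv ℂ f z‖ ≤ ‖fderiv ℂ f t‖ + lam := by
      intro x hx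
      have h0 := norm_add_le (fderiv ℂ f x - fderiv ℂ f t) (fderiv ℂ f t)
      rw [sub_add_cancel] at h0
      linarith [hlt x hx]
    exact (diff_line_op hV hf t hsub he.le hbd).sub_const _
  have hmaps : Set.MapsTo Ψ (ball (0:ℂ) r₀) (ball (Ψ 0) lam) := by
    intro ζ hζ
    rw [mem_ball, hΨ0, dist_zero_right]
    rw [mem_ball, dist_zero_right] at hζ
    exact hlt _ (hpt ζ hζ)
  set ζ' : ℂ := (‖z - t‖ : ℂ) with hζ'def
  have hζ'mem : ζ' ∈ ball (0:ℂ) r₀ := by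
    rw [mem_ball, dist_zero_right, hζ'def]
    rw [Complex.norm_real, norm_norm]
    rw [mem_ball, dist_eq_norm] at hz
    exact hz
  have hΨζ' : t + ζ' • e = z := by
    rw [hζ'def, hedef, Complex.coe_smul, smul_smul, mul_inv_cancel₀ hnz, one_smul,
      add_sub_cancel]
  have hS := Complex.dist_le_div_mul_dist_of_mapsTo_ball hdiff (hmaps.mono_right ball_subset_closedBall) hζ'mem
  rw [hΨ0, dist_zero_right, dist_zero_right] at hS
  have h1 : Ψ ζ' = fderiv ℂ f z - fderiv ℂ f t := by
    simp only [hΨdef]; rw [hΨζ']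
  rw [h1] at hS
  have h2 : ‖ζ'‖ = ‖z - t‖ := by rw [hζ'def, Complex.norm_real, norm_norm]
  rw [h2] at hS
  calc ‖fderiv ℂ f z - fderiv ℂ f t‖ ≤ lam / r₀ * ‖z - t‖ := hS
    _ = lam * ‖z - t‖ / r₀ := by ring


variable {V : Set (EuclideanSpace ℂ (Fin n))} (hV : IsOpen V)
    {f : EuclideanSpace ℂ (Fin n) → EuclideanSpace ℂ (Fin n)} (hf : DifferentiableOn ℂ f V)
    (t : EuclideanSpace ℂ (Fin n)) {r₀ lam : ℝ} (hsub : ball t r₀ ⊆ V) (hr₀ : 0 < r₀)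
    (hlt : ∀ z ∈ ball t r₀, ‖fderiv ℂ f z - fderiv ℂ f t‖ < lam)

include hV hf hsub hr₀ hlt in
lemma quad_bound : ∀ v : EuclideanSpace ℂ (Fin n), ‖v‖ < r₀ →
    ‖f (t + v) - f t - (fderiv ℂ f t) v‖ ≤ lam * ‖v‖^2 / (2*r₀) := by
  intro v hv
  have hP1 := deriv_schwarz hV hf t hsub hr₀ hlt
  have hlam : 0 < lam := (norm_nonneg _).trans_lt (hlt t (mem_ball_self hr₀))
  have hdiffat : ∀ x ∈ ball t r₀, DifferentiableAt ℂ f x := fun x hx =>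
    hf.differentiableAt (hV.mem_nhds (hsub hx))
  have hptmem : ∀ s : ℝ, s ∈ Icc (0:ℝ) 1 → t + s • v ∈ ball t r₀ := by
    intro s hs
    rw [mem_ball, dist_eq_norm, add_sub_cancel_left, norm_smul]
    calc ‖s‖ * ‖v‖ ≤ 1 * ‖v‖ := by
          gcongr
          rw [Real.norm_eq_abs, abs_of_nonneg hs.1]; exact hs.2
      _ < r₀ := by rwa [one_mul]
  set L := fderiv ℂ f t with hLdef
  set g : ℝ → EuclideanSpace ℂ (Fin n) := fun s => f (t + s • v) - f t - s • (L v) with hgdef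
  set g' : ℝ → EuclideanSpace ℂ (Fin n) := fun s => (fderiv ℂ f (t + s • v)) v - L v with hg'def
  have hder : ∀ s ∈ Icc (0:ℝ) 1, HasDerivAt g (g' s) s := by
    intro s hs
    have hin : HasDerivAt (fun s : ℝ => t + s • v) v s := by
      simpa [id_eq, one_smul] using ((hasDerivAt_id s).smul_const v).const_add t
    have hfd : HasFDerivAt f ((fderiv ℂ f (t + s • v)).restrictScalars ℝ) (t + s • v) :=
      ((hdiffat _ (hptmem s hs)).hasFDerivAt).restrictScalars ℝ
    have hcomp := hfd.comp_hasDerivAt s hin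
    have hs2 : HasDerivAt (fun s : ℝ => s • (L v)) (L v) s := by
      simpa [id_eq, one_smul] using (hasDerivAt_id s).smul_const (L v)
    simpa [hgdef, hg'def] using (hcomp.sub_const (f t)).fun_sub hs2
  have hcontg : ContinuousOn g (Icc (0:ℝ) 1) := fun s hs =>
    (hder s hs).continuousAt.continuousWithinAt
  set C : ℝ := lam * ‖v‖^2 / r₀ with hCdef
  have hC : 0 ≤ C := by positivity
  set B : ℝ → ℝ := fun s => C * (s^2/2) with hBdef
  have hBder : ∀ s : ℝ, HasDerivAt B (C * s) s := by
    intro s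
    have : HasDerivAt (fun s : ℝ => s^2/2) s s := by
      simpa using (hasDerivAt_pow 2 s).div_const 2
    simpa using this.const_mul C
  have hbound : ∀ s ∈ Ico (0:ℝ) 1, ‖g' s‖ ≤ C * s := by
    intro s hs
    have hp := hP1 _ (hptmem s ⟨hs.1, hs.2.le⟩)
    rw [add_sub_cancel_left] at hp
    have h1 : ‖g' s‖ ≤ ‖fderiv ℂ f (t + s • v) - L‖ * ‖v‖ := by
      have h2 : g' s = (fderiv ℂ f (t + s • v) - L) v := rfl
      rw [h2]
      exact ContinuousLinearMap.le_opNorm _ v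
    calc ‖g' s‖ ≤ ‖fderiv ℂ f (t + s • v) - L‖ * ‖v‖ := h1
      _ ≤ (lam * ‖s • v‖ / r₀) * ‖v‖ := mul_le_mul_of_nonneg_right hp (norm_nonneg v)
      _ = C * ‖s‖ := by rw [norm_smul, hCdef]; ring
      _ = C * s := by rw [Real.norm_eq_abs, abs_of_nonneg hs.1]
  have hkey := image_norm_le_of_norm_deriv_right_le_deriv_boundary hcontg
    (fun s hs => (hder s (Ico_subset_Icc_self hs)).hasDerivWithinAt)
    (by simp [hgdef, hBdef] : ‖g 0‖ ≤ B 0)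
    hBder hbound (right_mem_Icc.2 zero_le_one)
  have hg1 : g 1 = f (t + v) - f t - L v := by simp [hgdef]
  have hB1 : B 1 = lam * ‖v‖^2/(2*r₀) := by rw [hBdef, hCdef]; ring
  rw [hg1, hB1] at hkey
  exact hkey

include hV hf hsub hr₀ hlt in
lemma lip_bound {ρ : ℝ} (hρ : ρ < r₀) (hρ0 : 0 ≤ ρ) :
    ∀ z₁ ∈ closedBall t ρ, ∀ z₂ ∈ closedBall t ρ,
      ‖(f z₁ - (fderiv ℂ f t) z₁) - (f z₂ - (fderiv ℂ f t) z₂)‖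
        ≤ lam * ρ / r₀ * ‖z₁ - z₂‖ := by
  intro z₁ h₁ z₂ h₂
  have hP1 := deriv_schwarz hV hf t hsub hr₀ hlt
  have hlam : 0 < lam := (norm_nonneg _).trans_lt (hlt t (mem_ball_self hr₀))
  have hdiffat : ∀ x ∈ ball t r₀, DifferentiableAt ℂ f x := fun x hx =>
    hf.differentiableAt (hV.mem_nhds (hsub hx))
  set L := fderiv ℂ f t with hLdef
  have hsubb : closedBall t ρ ⊆ ball t r₀ := closedBall_subset_ball hρ
  have hd : ∀ x ∈ closedBall t ρ, DifferentiableAt ℂ (fun z => f z - L z) x := fun x hx =>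
    (hdiffat x (hsubb hx)).sub (L.differentiableAt)
  have hbd : ∀ x ∈ closedBall t ρ, ‖fderiv ℂ (fun z => f z - L z) x‖ ≤ lam * ρ / r₀ := by
    intro x hx
    have : fderiv ℂ (fun z => f z - L z) x = fderiv ℂ f x - L := by
      rw [fderiv_fun_sub (hdiffat x (hsubb hx)) L.differentiableAt, L.fderiv]
    rw [this]
    calc ‖fderiv ℂ f x - L‖ ≤ lam * ‖x - t‖ / r₀ := hP1 x (hsubb hx)
      _ ≤ lam * ρ / r₀ := by
          gcongr
          rwa [← dist_eq_norm, ← mem_closedBall]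
  exact (convex_closedBall t ρ).norm_image_sub_le_of_norm_fderiv_le hd hbd h₂ h₁


end HahnAux

end HahnProof

/-- **Hahn's lemma, part (b)**: covering of a ball of radius `r₀ λ_f / 2`. -/
theorem hahn_covering_lemma (n : ℕ)
    (V : Set (EuclideanSpace ℂ (Fin n))) (hV : IsOpen V)
    (f : EuclideanSpace ℂ (Fin n) → EuclideanSpace ℂ (Fin n))
    (hf : DifferentiableOn ℂ f V)
    (t : EuclideanSpace ℂ (Fin n)) (ht : t ∈ V)
    (hdet : (jacobian f t).det ≠ 0)
    (r₀ : ℝ) (hr₀ : 0 < r₀)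
    (hballΩ : ball t r₀ ⊆ {z ∈ V |
      ‖fderiv ℂ f z - fderiv ℂ f t‖ < Real.sqrt (minEigAhA (jacobian f t))}) :
    ball (f t) (r₀ * Real.sqrt (minEigAhA (jacobian f t)) / 2) ⊆ f '' ball t r₀ := by
  set lam : ℝ := Real.sqrt (minEigAhA (jacobian f t)) with hlamdef
  intro w hw
  rw [mem_ball, dist_eq_norm] at hw
  set L : EuclideanSpace ℂ (Fin n) →L[ℂ] EuclideanSpace ℂ (Fin n) := fderiv ℂ f t with hLdef
  have hsub : ball t r₀ ⊆ V := fun z hz => (hballΩ hz).1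
  have hlt : ∀ z ∈ ball t r₀, ‖fderiv ℂ f z - L‖ < lam := fun z hz => (hballΩ hz).2
  have hlam : 0 < lam := (norm_nonneg _).trans_lt (hlt t (mem_ball_self hr₀))
  have hlow : ∀ v, lam * ‖v‖ ≤ ‖L v‖ := fun v => HahnAux.lam_mul_norm_le L v
  -- L is a linear equivalence
  have hinj : Function.Injective L := by
    intro a b hab
    have h1 := hlow (a - b)
    rw [map_sub, hab, sub_self, norm_zero] at h1
    have h2 : ‖a - b‖ ≤ 0 := by
      by_contra h3
      push_neg at h3
      nlinarith
    rw [← sub_eq_zero]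
    exact norm_le_zero_iff.1 h2
  have hinj' : Function.Injective (L : EuclideanSpace ℂ (Fin n) →ₗ[ℂ] EuclideanSpace ℂ (Fin n)) :=
    hinj
  have hbij : Function.Bijective
      (L : EuclideanSpace ℂ (Fin n) →ₗ[ℂ] EuclideanSpace ℂ (Fin n)) :=
    ⟨hinj', (LinearMap.injective_iff_surjective).1 hinj'⟩
  set Aeq : EuclideanSpace ℂ (Fin n) ≃L[ℂ] EuclideanSpace ℂ (Fin n) :=
    (LinearEquiv.ofBijective _ hbij).toContinuousLinearEquiv with hAeqdef
  have hAeq : ∀ x, Aeq x = L x := fun x => rfl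
  have hsymmL : ∀ x, Aeq.symm (L x) = x := by
    intro x
    rw [← hAeq x]
    exact Aeq.symm_apply_apply x
  have hsymm_bound : ∀ y, ‖Aeq.symm y‖ ≤ lam⁻¹ * ‖y‖ := by
    intro y
    have h1 := hlow (Aeq.symm y)
    rw [← hAeq, Aeq.apply_symm_apply] at h1
    rw [inv_mul_eq_div, le_div_iff₀ hlam, mul_comm]
    exact h1
  by_cases hwft : w = f t
  · exact ⟨t, mem_ball_self hr₀, hwft.symm⟩
  set u : EuclideanSpace ℂ (Fin n) := w - f t with hudef
  have hu0 : 0 < ‖u‖ := norm_pos_iff.2 (sub_ne_zero.2 hwft)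
  set ρ : ℝ := 2 * ‖u‖ / lam with hρdef
  have hρ0 : 0 < ρ := by positivity
  have hρr : ρ < r₀ := by
    rw [hρdef, div_lt_iff₀ hlam]
    nlinarith
  set T : EuclideanSpace ℂ (Fin n) → EuclideanSpace ℂ (Fin n) :=
    fun z => z - Aeq.symm (f z - w) with hTdef
  have hquad := HahnAux.quad_bound hV hf t hsub hr₀ hlt
  -- self map
  have hTmap : ∀ z ∈ closedBall t ρ, T z ∈ closedBall t ρ := by
    intro z hz
    have hvρ : ‖z - t‖ ≤ ρ := by rwa [mem_closedBall, dist_eq_norm] at hz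
    have hvr : ‖z - t‖ < r₀ := lt_of_le_of_lt hvρ hρr
    have hq := hquad (z - t) hvr
    rw [add_sub_cancel] at hq
    have hqρ : ‖f z - f t - L (z - t)‖ ≤ lam * ρ^2/(2*r₀) := by
      refine hq.trans ?_
      gcongr
    have hdec : f z - w = L (z - t) + (f z - f t - L (z - t)) - u := by
      rw [hudef]; abel
    have hTz : T z - t = Aeq.symm u - Aeq.symm (f z - f t - L (z - t)) := by
      rw [hTdef]
      simp only
      rw [hdec, map_sub, map_add, hsymmL]
      abel
    rw [mem_closedBall, dist_eq_norm, hTz]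
    calc ‖Aeq.symm u - Aeq.symm (f z - f t - L (z - t))‖
        ≤ ‖Aeq.symm u‖ + ‖Aeq.symm (f z - f t - L (z - t))‖ := norm_sub_le _ _
      _ ≤ lam⁻¹ * ‖u‖ + lam⁻¹ * (lam * ρ^2/(2*r₀)) := by
          refine add_le_add (hsymm_bound u) ((hsymm_bound _).trans ?_)
          exact mul_le_mul_of_nonneg_left hqρ (by positivity)
      _ = ρ/2 + ρ^2/(2*r₀) := by
          rw [hρdef]; field_simp
      _ ≤ ρ/2 + ρ/2 := by
          refine add_le_add le_rfl ?_
          rw [div_le_div_iff₀ (by positivity) (by norm_num : (0:ℝ) < 2)]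
          nlinarith
      _ = ρ := by ring
  -- contraction
  have hlip := HahnAux.lip_bound hV hf t hsub hr₀ hlt hρr hρ0.le
  have hTlip : ∀ z₁ ∈ closedBall t ρ, ∀ z₂ ∈ closedBall t ρ,
      ‖T z₁ - T z₂‖ ≤ ρ/r₀ * ‖z₁ - z₂‖ := by
    intro z₁ h₁ z₂ h₂
    have hdec : T z₁ - T z₂ = Aeq.symm (L (z₁ - z₂) - (f z₁ - f z₂)) := by
      have h1 : Aeq.symm (L (z₁ - z₂) - (f z₁ - f z₂))
          = (z₁ - z₂) - Aeq.symm (f z₁ - f z₂) := by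
        rw [map_sub, hsymmL]
      rw [h1, hTdef]
      simp only [map_sub]
      abel
    have h3 : L (z₁ - z₂) - (f z₁ - f z₂)
        = -((f z₁ - L z₁) - (f z₂ - L z₂)) := by
      rw [map_sub]; abel
    rw [hdec]
    calc ‖Aeq.symm (L (z₁ - z₂) - (f z₁ - f z₂))‖
        ≤ lam⁻¹ * ‖L (z₁ - z₂) - (f z₁ - f z₂)‖ := hsymm_bound _
      _ ≤ lam⁻¹ * (lam * ρ / r₀ * ‖z₁ - z₂‖) := by
          refine mul_le_mul_of_nonneg_left ?_ (by positivity)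
          rw [h3, norm_neg]
          exact hlip z₁ h₁ z₂ h₂
      _ = ρ/r₀ * ‖z₁ - z₂‖ := by field_simp
  -- Banach fixed point
  haveI hne : Nonempty ↥(closedBall t ρ) := ⟨⟨t, mem_closedBall_self hρ0.le⟩⟩
  haveI hcs : CompleteSpace ↥(closedBall t ρ) := isClosed_closedBall.completeSpace_coe
  set K : NNReal := ⟨ρ/r₀, by positivity⟩ with hKdef
  have hK1 : (K : ℝ) < 1 := by
    rw [hKdef]
    show ρ/r₀ < 1
    rw [div_lt_one hr₀]
    exact hρr
  set S : ↥(closedBall t ρ) → ↥(closedBall t ρ) :=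
    fun z => ⟨T z, hTmap z z.2⟩ with hSdef
  have hCW : ContractingWith K S := by
    constructor
    · exact_mod_cast hK1
    · refine LipschitzWith.of_dist_le_mul fun x y => ?_
      have h1 : dist (S x) (S y) = dist (T x) (T y) := Subtype.dist_eq (S x) (S y)
      have h2 : dist x y
          = dist (x : EuclideanSpace ℂ (Fin n)) (y : EuclideanSpace ℂ (Fin n)) :=
        Subtype.dist_eq x y
      rw [h1, h2, dist_eq_norm, dist_eq_norm]
      exact hTlip _ x.2 _ y.2
  set zstar := ContractingWith.fixedPoint S hCW with hzdef
  have hfix : S zstar = zstar := hCW.fixedPoint_isFixedPt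
  have hfix' : T zstar = (zstar : EuclideanSpace ℂ (Fin n)) := congrArg Subtype.val hfix
  have h0 : Aeq.symm (f zstar - w) = 0 := by
    have := hfix'
    rw [hTdef] at this
    simp only at this
    exact sub_eq_self.1 this
  have hfz : f zstar = w := by
    have h1 : f (zstar : EuclideanSpace ℂ (Fin n)) - w
        = Aeq (Aeq.symm (f zstar - w)) := (Aeq.apply_symm_apply _).symm
    rw [h0, map_zero] at h1
    exact sub_eq_zero.1 h1
  exact ⟨zstar, closedBall_subset_ball hρr zstar.2, hfz⟩
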